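/- arXiv:math/0207235 — 2 statements merged into one kernel-verified Lean document; each statement's English description precedes it below -/
import Mathlib

section
/- Let A be a complete filtered algebra with maximal ideal m_A, and suppose f, h ∈ m_A^2 (taken modulo m_A^{n+1}) and g ∈ m_A^n/m_A^{n+1} for some n ≥ 3. Then for the CBH product ⋆ (with respect to a Poisson bracket satisfying {m_A^k,m_A^l} ⊆ m_A^{k+l-1}), one has f ⋆ (h + g) = (f ⋆ h) + g and (f + g) ⋆ h = (f ⋆ h) + g in A/m_A^{n+1}. -/
/-- The evaluation of a left-normed bracket word: `evalWord P x [i₀, i₁, …, i_k]`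
is the iterated bracket `P (… (P (x i₀) (x i₁)) …) (x i_k)` (and `0` on the empty
word). -/
def evalWord {A : Type*} [CommRing A] (P : A → A → A) (x : Fin 2 → A) :
    List (Fin 2) → A
  | [] => 0
  | i :: l => l.foldl (fun c j => P c (x j)) (x i)

/-- Let `A` be a Poisson formal series algebra (complete filtered, over
a field of characteristic zero) with maximal ideal `m` and Poisson bracket `P` satisfying
`{m^k, m^l} ⊆ m^{k+l-1}`.  Let `⋆` be the Campbell–Baker–Hausdorff product: its
total-degree-`k` term is the Lie polynomial with coefficients `c k` on bracket words of
length `k`, with `c 1 = X + Y` (modulo `m^{n+1}` only the terms of degree `≤ n` matter,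
so we use the truncated product `starT`).  If `f, h ∈ m²` and `g ∈ m^n` with `n ≥ 3`,
then `f ⋆ (h + g) = (f ⋆ h) + g` and `(f + g) ⋆ h = (f ⋆ h) + g` in `A / m^{n+1}`. -/
theorem cbh_top_degree_additivity
    {K A : Type*} [Field K] [CharZero K] [CommRing A] [Algebra K A]
    (m : Ideal A) (hmax : m.IsMaximal) (hcomplete : IsAdicComplete m A)
    (P : A →ₗ[K] A →ₗ[K] A)
    (hfil : ∀ k l : ℕ, ∀ a ∈ m ^ k, ∀ b ∈ m ^ l, P a b ∈ m ^ (k + l - 1))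
    (c : ℕ → (List (Fin 2) →₀ K))
    (hc1 : c 1 = Finsupp.single [0] 1 + Finsupp.single [1] 1)
    (hsupp : ∀ k : ℕ, ∀ w ∈ (c k).support, w.length = k)
    (starT : ℕ → A → A → A)
    (hstar : ∀ N : ℕ, ∀ f g : A,
      starT N f g =
        ∑ k ∈ Finset.Icc 1 N,
          (c k).sum fun w t => t • evalWord (fun x y => P x y) ![f, g] w)
    (n : ℕ) (hn : 3 ≤ n)
    (f h : A) (hf : f ∈ m ^ 2) (hh : h ∈ m ^ 2) (g : A) (hg : g ∈ m ^ n) :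
    starT n f (h + g) - (starT n f h + g) ∈ m ^ (n + 1) ∧
    starT n (f + g) h - (starT n f h + g) ∈ m ^ (n + 1) := by
  classical
  have hmn2 : m ^ n ≤ m ^ 2 := Ideal.pow_le_pow_right (by omega)
  -- Key foldl estimate
  have foldl_key : ∀ (x x' : Fin 2 → A), (∀ j, x j ∈ m ^ 2) → (∀ j, x' j ∈ m ^ 2) →
      (∀ j, x j - x' j ∈ m ^ n) →
      ∀ (l : List (Fin 2)) (s : ℕ) (a a' : A), a ∈ m ^ (2 + s) → a' ∈ m ^ (2 + s) →
        a - a' ∈ m ^ (n + s) →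
        l.foldl (fun c j => P c (x j)) a ∈ m ^ (2 + s + l.length) ∧
        l.foldl (fun c j => P c (x' j)) a' ∈ m ^ (2 + s + l.length) ∧
        l.foldl (fun c j => P c (x j)) a - l.foldl (fun c j => P c (x' j)) a'
          ∈ m ^ (n + s + l.length) := by
    intro x x' hx hx' hxd l
    induction l with
    | nil =>
      intro s a a' ha ha' hdd
      simpa using ⟨ha, ha', hdd⟩
    | cons j l ih =>
      intro s a a' ha ha' hdd
      have h1 : P a (x j) ∈ m ^ (2 + (s + 1)) := by
        have h0 := hfil (2 + s) 2 a ha (x j) (hx j)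
        have e : 2 + s + 2 - 1 = 2 + (s + 1) := by omega
        rwa [e] at h0
      have h2 : P a' (x' j) ∈ m ^ (2 + (s + 1)) := by
        have h0 := hfil (2 + s) 2 a' ha' (x' j) (hx' j)
        have e : 2 + s + 2 - 1 = 2 + (s + 1) := by omega
        rwa [e] at h0
      have h3 : P a (x j) - P a' (x' j) ∈ m ^ (n + (s + 1)) := by
        have e1 : P a (x j) - P a' (x' j)
            = P (a - a') (x j) + P a' (x j - x' j) := by
          simp only [map_sub, LinearMap.sub_apply]
          ring
        have m1 : P (a - a') (x j) ∈ m ^ (n + (s + 1)) := by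
          have h0 := hfil (n + s) 2 _ hdd (x j) (hx j)
          have e : n + s + 2 - 1 = n + (s + 1) := by omega
          rwa [e] at h0
        have m2 : P a' (x j - x' j) ∈ m ^ (n + (s + 1)) := by
          have h0 := hfil (2 + s) n a' ha' _ (hxd j)
          have e : 2 + s + n - 1 = n + (s + 1) := by omega
          rwa [e] at h0
        rw [e1]; exact Ideal.add_mem _ m1 m2
      have H := ih (s + 1) _ _ h1 h2 h3
      have e1 : 2 + (s + 1) + l.length = 2 + s + (j :: l).length := by
        simp [List.length_cons]; omega
      have e2 : n + (s + 1) + l.length = n + s + (j :: l).length := by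
        simp [List.length_cons]; omega
      rw [e1, e2] at H
      simpa [List.foldl_cons] using H
  -- general two-variable statement
  have key : ∀ (x x' : Fin 2 → A), (∀ j, x j ∈ m ^ 2) → (∀ j, x' j ∈ m ^ 2) →
      (∀ j, x j - x' j ∈ m ^ n) →
      (∑ k ∈ Finset.Icc 1 n, (c k).sum fun w t => t • evalWord (fun a b => P a b) x w)
        - ((∑ k ∈ Finset.Icc 1 n, (c k).sum fun w t => t • evalWord (fun a b => P a b) x' w)
            + ((x 0 - x' 0) + (x 1 - x' 1))) ∈ m ^ (n + 1) := by
    intro x x' hx hx' hxd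
    have hev : ∀ w : List (Fin 2), 2 ≤ w.length →
        evalWord (fun a b => P a b) x w - evalWord (fun a b => P a b) x' w ∈ m ^ (n + 1) := by
      intro w hw
      match w, hw with
      | i :: l, hw =>
        have H := (foldl_key x x' hx hx' hxd l 0 (x i) (x' i)
          (by simpa using hx i) (by simpa using hx' i) (by simpa using hxd i)).2.2
        have hl : 1 ≤ l.length := by
          simp [List.length_cons] at hw; omega
        have hle : m ^ (n + 0 + l.length) ≤ m ^ (n + 1) :=
          Ideal.pow_le_pow_right (by omega)
        exact hle H
    set F : (Fin 2 → A) → ℕ → A :=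
      fun y k => (c k).sum fun w t => t • evalWord (fun a b => P a b) y w with hF
    have hF1 : ∀ y : Fin 2 → A, F y 1 = y 0 + y 1 := by
      intro y
      rw [hF]
      simp only [hc1]
      rw [Finsupp.sum_add_index' (by intro a; simp) (by intro a b₁ b₂; rw [add_smul])]
      rw [Finsupp.sum_single_index (by simp), Finsupp.sum_single_index (by simp)]
      simp [evalWord]
    have h1mem : (1 : ℕ) ∈ Finset.Icc 1 n := by
      simp; omega
    have hsplit : (∑ k ∈ Finset.Icc 1 n, F x k) - ((∑ k ∈ Finset.Icc 1 n, F x' k)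
          + ((x 0 - x' 0) + (x 1 - x' 1)))
        = ∑ k ∈ (Finset.Icc 1 n).erase 1, (F x k - F x' k) := by
      rw [← Finset.add_sum_erase _ _ h1mem, ← Finset.add_sum_erase _ (F x') h1mem,
        hF1 x, hF1 x', Finset.sum_sub_distrib]
      ring
    rw [hsplit]
    refine Submodule.sum_mem _ fun k hk => ?_
    have hk2 : 2 ≤ k := by
      rw [Finset.mem_erase, Finset.mem_Icc] at hk
      omega
    have hdiff : F x k - F x' k
        = ∑ w ∈ (c k).support, (c k) w • (evalWord (fun a b => P a b) x w
            - evalWord (fun a b => P a b) x' w) := by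
      rw [hF]
      simp only [Finsupp.sum]
      rw [← Finset.sum_sub_distrib]
      exact Finset.sum_congr rfl fun w _ => (smul_sub _ _ _).symm
    rw [hdiff]
    refine Submodule.sum_mem _ fun w hw => ?_
    rw [Algebra.smul_def]
    exact Ideal.mul_mem_left _ _ (hev w (by rw [hsupp k w hw]; omega))
  have hfg : f + g ∈ m ^ 2 := Ideal.add_mem _ hf (hmn2 hg)
  have hhg : h + g ∈ m ^ 2 := Ideal.add_mem _ hh (hmn2 hg)
  constructor
  · have H := key ![f, h + g] ![f, h]
      (by intro j; fin_cases j <;> simpa using (by assumption : _ ∈ m ^ 2))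
      (by intro j; fin_cases j <;> simp [hf, hh])
      (by intro j; fin_cases j <;> simp [hg])
    rw [hstar n f (h + g), hstar n f h]
    simpa using H
  · have H := key ![f + g, h] ![f, h]
      (by intro j; fin_cases j <;> simp [hfg, hh])
      (by intro j; fin_cases j <;> simp [hf, hh])
      (by intro j; fin_cases j <;> simp [hg])
    rw [hstar n (f + g) h, hstar n f h]
    simpa using H
end

section
/- Let g be a finite-dimensional vector space and n ≥ 3. Inside S^n(g ⊕ g) ≅ ⊕_{a+b=n} S^a(g)⊗S^b(g), the intersection Ker(d⊗id) ∩ Ker(id⊗d) is zero, where d is the co-Hochschild coboundary of S(g). More precisely, Ker(d⊗id) ∩ Ker(id⊗d) = g⊗g ⊂ S²(g⊕g), which meets S^n(g⊕g) trivially for n ≥ 3. -/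
open TensorProduct MvPolynomial

/-- The cocommutative coproduct `Δ₀` of the symmetric Hopf algebra
`S(g) = K[X₁, …, X_n]`, with the variables primitive. -/
noncomputable def comul (K : Type*) [CommRing K] (n : ℕ) :
    MvPolynomial (Fin n) K →ₐ[K]
      (MvPolynomial (Fin n) K ⊗[K] MvPolynomial (Fin n) K) :=
  aeval fun i => X i ⊗ₜ[K] 1 + 1 ⊗ₜ[K] X i

/-- The co-Hochschild coboundary `d(f) = Δ₀(f) − f⊗1 − 1⊗f`. -/
noncomputable def coHochschildD (K : Type*) [CommRing K] (n : ℕ) :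
    MvPolynomial (Fin n) K →ₗ[K]
      (MvPolynomial (Fin n) K ⊗[K] MvPolynomial (Fin n) K) :=
  (comul K n).toLinearMap -
    (Algebra.TensorProduct.includeLeft :
      MvPolynomial (Fin n) K →ₐ[K]
        MvPolynomial (Fin n) K ⊗[K] MvPolynomial (Fin n) K).toLinearMap -
    (Algebra.TensorProduct.includeRight :
      MvPolynomial (Fin n) K →ₐ[K]
        MvPolynomial (Fin n) K ⊗[K] MvPolynomial (Fin n) K).toLinearMap

/-- `d ⊗ id`, landing in `P ⊗ (P ⊗ P)`. -/
noncomputable def dTensorId (K : Type*) [CommRing K] (n : ℕ) :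
    (MvPolynomial (Fin n) K ⊗[K] MvPolynomial (Fin n) K) →ₗ[K]
      (MvPolynomial (Fin n) K ⊗[K]
        (MvPolynomial (Fin n) K ⊗[K] MvPolynomial (Fin n) K)) :=
  (TensorProduct.assoc K (MvPolynomial (Fin n) K) (MvPolynomial (Fin n) K)
      (MvPolynomial (Fin n) K)).toLinearMap ∘ₗ
    LinearMap.rTensor (MvPolynomial (Fin n) K) (coHochschildD K n)

/-- `id ⊗ d`, landing in `P ⊗ (P ⊗ P)`. -/
noncomputable def idTensorD (K : Type*) [CommRing K] (n : ℕ) :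
    (MvPolynomial (Fin n) K ⊗[K] MvPolynomial (Fin n) K) →ₗ[K]
      (MvPolynomial (Fin n) K ⊗[K]
        (MvPolynomial (Fin n) K ⊗[K] MvPolynomial (Fin n) K)) :=
  LinearMap.lTensor (MvPolynomial (Fin n) K) (coHochschildD K n)


/-- `g ⊗ g ⊂ S(g) ⊗ S(g)`, where `g` is the span of the variables. -/
noncomputable def gTensorG (K : Type*) [CommRing K] (n : ℕ) :
    Submodule K (MvPolynomial (Fin n) K ⊗[K] MvPolynomial (Fin n) K) :=
  Submodule.map₂ (TensorProduct.mk K (MvPolynomial (Fin n) K) (MvPolynomial (Fin n) K))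
    (Submodule.span K (Set.range (X : Fin n → MvPolynomial (Fin n) K)))
    (Submodule.span K (Set.range (X : Fin n → MvPolynomial (Fin n) K)))

/-- The degree-`m` component `S^m(g ⊕ g) = ⊕_{a+b=m} S^a(g) ⊗ S^b(g)` of
`S(g) ⊗ S(g)`. -/
noncomputable def degreeComponent2 (K : Type*) [CommRing K] (n : ℕ) (m : ℕ) :
    Submodule K (MvPolynomial (Fin n) K ⊗[K] MvPolynomial (Fin n) K) :=
  ⨆ (p : ℕ × ℕ) (_ : p.1 + p.2 = m),
    Submodule.map₂ (TensorProduct.mk K (MvPolynomial (Fin n) K) (MvPolynomial (Fin n) K))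
      (homogeneousSubmodule (Fin n) K p.1) (homogeneousSubmodule (Fin n) K p.2)

/-!
Reading off the coefficient of `Xᵢ` in the right factor of `Δ₀ f = f ⊗ 1 + 1 ⊗ f` gives
`∂ᵢ f = const`, and evaluating the right factor at `0` gives `f(0) = 0`; in characteristic zero
this forces `f` to be linear, so `Ker d = g`. Since `S(g)` is flat, `Ker(d ⊗ id) = g ⊗ S(g)` and
`Ker(id ⊗ d) = S(g) ⊗ g`, and in the tensor basis of monomials these meet in `g ⊗ g`, which is
spanned by basis vectors of total degree `2`.
-/

section TensorBasis

variable {R ι κ M N : Type*} [CommRing R] [AddCommGroup M] [AddCommGroup N]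
  [Module R M] [Module R N]

lemma Module.Basis.span_image_inf_span_image (b : Module.Basis ι R M) (s t : Set ι) :
    Submodule.span R (b '' s) ⊓ Submodule.span R (b '' t) =
      Submodule.span R (b '' (s ∩ t)) := by
  ext x
  simp only [Submodule.mem_inf, Module.Basis.mem_span_image, Set.subset_inter_iff]

lemma Submodule.map₂_mk_span_image_basis (b : Module.Basis ι R M) (c : Module.Basis κ R N)
    (s : Set ι) (t : Set κ) :
    map₂ (TensorProduct.mk R M N) (span R (b '' s)) (span R (c '' t)) =
      span R (b.tensorProduct c '' s ×ˢ t) := by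
  rw [map₂_span_span, Set.image2_image_left, Set.image2_image_right, ← Set.image_prod]
  congr 2
  exact funext fun p => (b.tensorProduct_apply' c p).symm

lemma Submodule.map₂_mk_span_image_top_inf (b : Module.Basis ι R M) (c : Module.Basis κ R N)
    (s : Set ι) (t : Set κ) :
    map₂ (TensorProduct.mk R M N) (span R (b '' s)) ⊤ ⊓
        map₂ (TensorProduct.mk R M N) ⊤ (span R (c '' t)) =
      map₂ (TensorProduct.mk R M N) (span R (b '' s)) (span R (c '' t)) := by
  rw [← b.span_eq, ← c.span_eq, ← Set.image_univ, ← Set.image_univ,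
    map₂_mk_span_image_basis, map₂_mk_span_image_basis, map₂_mk_span_image_basis,
    Module.Basis.span_image_inf_span_image, Set.prod_inter_prod, Set.inter_univ, Set.univ_inter]

end TensorBasis

section FlatKernel

variable {R M N Q : Type*} [CommRing R] [AddCommGroup M] [AddCommGroup N] [AddCommGroup Q]
  [Module R M] [Module R N] [Module R Q] [Module.Flat R Q]

lemma LinearMap.ker_rTensor_eq_map₂ (g : M →ₗ[R] N) :
    ker (g.rTensor Q) = Submodule.map₂ (TensorProduct.mk R M Q) (ker g) ⊤ := by
  rw [exact_iff.mp (Module.Flat.rTensor_exact Q g.exact_subtype_ker_map), rTensor,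
    TensorProduct.range_map, Submodule.range_subtype, range_id]

lemma LinearMap.ker_lTensor_eq_map₂ (g : M →ₗ[R] N) :
    ker (g.lTensor Q) = Submodule.map₂ (TensorProduct.mk R Q M) ⊤ (ker g) := by
  rw [exact_iff.mp (Module.Flat.lTensor_exact Q g.exact_subtype_ker_map), lTensor,
    TensorProduct.range_map, Submodule.range_subtype, range_id]

end FlatKernel

section Homogeneous

variable {σ R : Type*} [CommRing R]

lemma MvPolynomial.homogeneousSubmodule_eq_span_basisMonomials (a : ℕ) :
    homogeneousSubmodule σ R a = Submodule.span R (basisMonomials σ R '' {d | d.degree = a}) := by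
  rw [homogeneousSubmodule_eq_finsupp_supported, AddMonoidAlgebra.supported_eq_span_single,
    coe_basisMonomials]
  rfl

lemma MvPolynomial.map₂_mk_homogeneousSubmodule (a b : ℕ) :
    Submodule.map₂ (TensorProduct.mk R _ _)
        (homogeneousSubmodule σ R a) (homogeneousSubmodule σ R b) =
      Submodule.span R ((basisMonomials σ R).tensorProduct (basisMonomials σ R) ''
        {d | d.degree = a} ×ˢ {d | d.degree = b}) := by
  rw [homogeneousSubmodule_eq_span_basisMonomials, homogeneousSubmodule_eq_span_basisMonomials,
    Submodule.map₂_mk_span_image_basis]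

lemma MvPolynomial.isHomogeneous_one_of_pderiv_eq_C [NoZeroDivisors R] [CharZero R]
    {f : MvPolynomial σ R} (c : σ → R) (h₀ : constantCoeff f = 0)
    (hc : ∀ i, pderiv i f = C (c i)) : f.IsHomogeneous 1 := by
  classical
  intro u hu
  obtain ⟨i, hi⟩ : ∃ i, u i ≠ 0 := by
    by_contra! h
    exact hu (by rw [show u = 0 from Finsupp.ext h, ← constantCoeff_eq, h₀])
  have hle : Finsupp.single i 1 ≤ u := Finsupp.single_le_iff.mpr (Nat.one_le_iff_ne_zero.mpr hi)
  -- `coeff u f * u i` is the coefficient of `u - eᵢ` in the constant `∂ᵢ f`, so `u = eᵢ`.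
  have hcoeff := coeff_pderiv (i := i) f (u - Finsupp.single i 1)
  rw [tsub_add_cancel_of_le hle, hc, coeff_C] at hcoeff
  have hsub : u - Finsupp.single i 1 = 0 := by
    by_contra h
    rw [if_neg (Ne.symm h), eq_comm, mul_eq_zero] at hcoeff
    refine hcoeff.elim hu fun h' => ?_
    norm_cast at h'
  rw [← tsub_add_cancel_of_le hle, hsub, zero_add]
  simp [Finsupp.weight_apply]

end Homogeneous

section RightFactor

variable {σ R : Type*} [CommRing R]

lemma MvPolynomial.coeff_single_one_mul (i : σ) (p q : MvPolynomial σ R) :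
    coeff (Finsupp.single i 1) (p * q) =
      constantCoeff p * coeff (Finsupp.single i 1) q +
        coeff (Finsupp.single i 1) p * constantCoeff q := by
  classical
  rw [coeff_mul, Finsupp.antidiagonal_single, Finset.sum_map,
    show Finset.HasAntidiagonal.antidiagonal 1 = {(0, 1), (1, 0)} by decide]
  simp [constantCoeff_eq]

@[simp]
lemma MvPolynomial.coeff_single_one_one (i : σ) :
    coeff (Finsupp.single i 1) (1 : MvPolynomial σ R) = 0 := by
  classical
  rw [coeff_one, if_neg (Finsupp.single_ne_zero.mpr one_ne_zero).symm]

variable (σ R)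

noncomputable def evalZeroRight :
    MvPolynomial σ R ⊗[R] MvPolynomial σ R →ₐ[R] MvPolynomial σ R :=
  Algebra.TensorProduct.lift (AlgHom.id R _) (aeval fun _ => 0) fun _ _ => .all _ _

noncomputable def coeffXRight (i : σ) :
    MvPolynomial σ R ⊗[R] MvPolynomial σ R →ₗ[R] MvPolynomial σ R :=
  (TensorProduct.rid R _).toLinearMap ∘ₗ (lcoeff R (Finsupp.single i 1)).lTensor _

variable {σ R}

@[simp]
lemma evalZeroRight_tmul (a b : MvPolynomial σ R) :
    evalZeroRight σ R (a ⊗ₜ b) = constantCoeff b • a := by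
  rw [evalZeroRight, Algebra.TensorProduct.lift_tmul, aeval_zero', AlgHom.id_apply,
    Algebra.smul_def]
  exact mul_comm _ _

@[simp]
lemma coeffXRight_tmul (i : σ) (a b : MvPolynomial σ R) :
    coeffXRight σ R i (a ⊗ₜ b) = coeff (Finsupp.single i 1) b • a := by
  simp [coeffXRight]

lemma coeffXRight_mul (i : σ) (u v : MvPolynomial σ R ⊗[R] MvPolynomial σ R) :
    coeffXRight σ R i (u * v) =
      coeffXRight σ R i u * evalZeroRight σ R v +
        evalZeroRight σ R u * coeffXRight σ R i v := by
  induction u using TensorProduct.induction_on with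
  | zero => simp
  | add u₁ u₂ h₁ h₂ => simp only [add_mul, map_add, h₁, h₂]; ring
  | tmul a b =>
    induction v using TensorProduct.induction_on with
    | zero => simp
    | add v₁ v₂ h₁ h₂ => simp only [mul_add, map_add, h₁, h₂]; ring
    | tmul c d =>
      simp only [Algebra.TensorProduct.tmul_mul_tmul, coeffXRight_tmul, evalZeroRight_tmul,
        coeff_single_one_mul, map_mul, smul_eq_C_mul, map_add]
      ring

end RightFactor

section Coproduct

variable {K : Type*} [CommRing K] {n : ℕ}

lemma evalZeroRight_comul (f : MvPolynomial (Fin n) K) :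
    evalZeroRight (Fin n) K (comul K n f) = f := by
  have : (evalZeroRight (Fin n) K).comp (comul K n) = AlgHom.id K _ :=
    algHom_ext fun i => by simp [comul]
  exact congr($this f)

lemma coeffXRight_comul (i : Fin n) (f : MvPolynomial (Fin n) K) :
    coeffXRight (Fin n) K i (comul K n f) = pderiv i f := by
  -- `coeffXRight ∘ Δ₀` is a derivation because `evalZeroRight ∘ Δ₀ = id`.
  let D : Derivation K (MvPolynomial (Fin n) K) (MvPolynomial (Fin n) K) :=
    { toLinearMap := coeffXRight (Fin n) K i ∘ₗ (comul K n).toLinearMap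
      map_one_eq_zero' := by simp [Algebra.TensorProduct.one_def]
      leibniz' := fun a b => by
        simp only [LinearMap.coe_comp, Function.comp_apply, AlgHom.toLinearMap_apply, map_mul,
          coeffXRight_mul, evalZeroRight_comul, smul_eq_mul]
        ring }
  have hD : D = pderiv i := derivation_ext fun j => by
    simp [D, comul, coeff_X, Pi.single_apply, Finsupp.single_left_inj, eq_comm]
  exact congr($hD f)

lemma ker_coHochschildD [IsDomain K] [CharZero K] :
    LinearMap.ker (coHochschildD K n) = homogeneousSubmodule (Fin n) K 1 := by
  refine le_antisymm (fun f hf => ?_) ?_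
  · have hΔ : comul K n f = f ⊗ₜ 1 + 1 ⊗ₜ f := by
      simpa [coHochschildD, sub_sub, sub_eq_zero] using hf
    apply isHomogeneous_one_of_pderiv_eq_C fun i => coeff (Finsupp.single i 1) f
    · simpa [evalZeroRight_comul] using congr(evalZeroRight (Fin n) K $hΔ)
    · intro i
      simpa [coeffXRight_comul, smul_eq_C_mul] using congr(coeffXRight (Fin n) K i $hΔ)
  · rw [homogeneousSubmodule_one_eq_span_X, Submodule.span_le]
    rintro _ ⟨i, rfl⟩
    simp [coHochschildD, comul]

lemma ker_dTensorId [IsDomain K] [CharZero K] :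
    LinearMap.ker (dTensorId K n) =
      Submodule.map₂ (TensorProduct.mk K _ _) (homogeneousSubmodule (Fin n) K 1) ⊤ := by
  rw [dTensorId, LinearEquiv.ker_comp, LinearMap.ker_rTensor_eq_map₂, ker_coHochschildD]

lemma ker_idTensorD [IsDomain K] [CharZero K] :
    LinearMap.ker (idTensorD K n) =
      Submodule.map₂ (TensorProduct.mk K _ _) ⊤ (homogeneousSubmodule (Fin n) K 1) := by
  rw [idTensorD, LinearMap.ker_lTensor_eq_map₂, ker_coHochschildD]

end Coproduct

lemma degreeComponent2_le_span {K : Type*} [CommRing K] (n m : ℕ) :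
    degreeComponent2 K n m ≤
      Submodule.span K ((basisMonomials (Fin n) K).tensorProduct (basisMonomials (Fin n) K) ''
        {d | d.1.degree + d.2.degree = m}) := by
  refine iSup₂_le fun p hp => ?_
  rw [map₂_mk_homogeneousSubmodule]
  refine Submodule.span_mono (Set.image_mono ?_)
  rintro d ⟨hd₁, hd₂⟩
  simp_all

/-- Let `g` be a finite-dimensional vector space over a field `K` of
characteristic `0`.  Inside `S(g ⊕ g) ≅ S(g) ⊗ S(g)`, one has
`Ker(d⊗id) ∩ Ker(id⊗d) = g ⊗ g ⊂ S²(g ⊕ g)`; in particular, this intersection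
meets the homogeneous component `S^m(g ⊕ g)` trivially for every `m ≥ 3`. -/
theorem ker_dTensorId_inf_ker_idTensorD
    (K : Type*) [Field K] [CharZero K] (n : ℕ) :
    LinearMap.ker (dTensorId K n) ⊓ LinearMap.ker (idTensorD K n) = gTensorG K n ∧
    ∀ m : ℕ, 3 ≤ m →
      (LinearMap.ker (dTensorId K n) ⊓ LinearMap.ker (idTensorD K n)) ⊓
        degreeComponent2 K n m = ⊥ := by
  have hG : gTensorG K n = Submodule.map₂ (TensorProduct.mk K _ _)
      (homogeneousSubmodule (Fin n) K 1) (homogeneousSubmodule (Fin n) K 1) := by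
    rw [gTensorG, homogeneousSubmodule_one_eq_span_X]
  have hker : LinearMap.ker (dTensorId K n) ⊓ LinearMap.ker (idTensorD K n) = gTensorG K n := by
    rw [ker_dTensorId, ker_idTensorD, hG, homogeneousSubmodule_eq_span_basisMonomials,
      Submodule.map₂_mk_span_image_top_inf]
  refine ⟨hker, fun m hm => ?_⟩
  rw [hker, eq_bot_iff]
  calc gTensorG K n ⊓ degreeComponent2 K n m
      ≤ _ := inf_le_inf_left _ (degreeComponent2_le_span n m)
    _ = ⊥ := by
      have hdisjoint :
          {d : Fin n →₀ ℕ | d.degree = 1} ×ˢ {d : Fin n →₀ ℕ | d.degree = 1} ∩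
            {d | d.1.degree + d.2.degree = m} = ∅ := by
        ext d
        simp only [Set.mem_inter_iff, Set.mem_prod, Set.mem_ofPred_eq, Set.mem_empty_iff_false,
          iff_false]
        omega
      rw [hG, map₂_mk_homogeneousSubmodule, Module.Basis.span_image_inf_span_image, hdisjoint,
        Set.image_empty, Submodule.span_empty]
end
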